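/- Identify ℝ² with ℂ. Let a ∈ B² \ {0}, let r = 1 − |a|, let z = a/|a| (the point where the circle C = {w ∈ ℂ : |w−a| = r} is internally tangent to the unit circle), and let α ∈ (0,π). Suppose x, y, x', y' ∈ C \ {z} satisfy ∠(x,z,y) = ∠(x',z,y') = α and |x'| = |y'|. Then (1−|x|²)·(1−|y|²) ≤ (1−|x'|²)·(1−|y'|²). -/

import Mathlib

open EuclideanGeometry Module Real

/-! With `t = |a|` and `z = a / |a|`, every `w` on the circle satisfies
`(1 - t) (1 - |w|²) = t |w - z|²`, so it suffices to compare the products of the chords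
`p = |x - z|`, `q = |y - z|`. The law of cosines and the law of sines in the circumcircle give
`p² + q² - 2 p q cos α = (2 r sin α)²` with `r = 1 - t`; as `p² + q² ≥ 2 p q` and `cos α < 1`,
the product `p q` is largest when `p = q`, which is the case for `x', y'` because `|x'| = |y'|`.
-/

namespace EuclideanGeometry

variable {V P : Type*} [NormedAddCommGroup V] [InnerProductSpace ℝ V] [MetricSpace P]
  [NormedAddTorsor V P]

theorem Sphere.dist_eq_two_mul_radius_mul_sin_angle [FiniteDimensional ℝ V]
    (hd : finrank ℝ V = 2) {s : Sphere P} {p₁ p₂ p₃ : P}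
    (hp₁ : p₁ ∈ s) (hp₂ : p₂ ∈ s) (hp₃ : p₃ ∈ s) (h₁₂ : p₁ ≠ p₂) (h₃₂ : p₃ ≠ p₂) :
    dist p₁ p₃ = 2 * s.radius * sin (∠ p₁ p₂ p₃) := by
  by_cases h₁₃ : p₁ = p₃
  · subst h₁₃
    simp [angle_self_of_ne h₁₂]
  have hind : AffineIndependent ℝ ![p₁, p₂, p₃] :=
    (s.cospherical.subset (by simp [Set.insert_subset_iff, hp₁, hp₂, hp₃])).affineIndependent_of_ne
      h₁₂ h₁₃ h₃₂.symm
  let t : Affine.Triangle ℝ P := ⟨_, hind⟩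
  have hr : s.radius = t.circumradius :=
    t.eq_circumradius_of_dist_eq (p := s.center)
      (by rw [hind.affineSpan_eq_top_iff_card_eq_finrank_add_one.mpr (by simp [hd])]; trivial)
      (by intro i; fin_cases i <;> assumption)
  have hsin : sin (∠ p₁ p₂ p₃) ≠ 0 :=
    sin_ne_zero_of_not_collinear (affineIndependent_iff_not_collinear_set.mp hind)
  have h := t.dist_div_sin_angle_eq_two_mul_circumradius (i₁ := 0) (i₂ := 1) (i₃ := 2)
    (by decide) (by decide) (by decide)
  change dist p₁ p₃ / sin (∠ p₁ p₂ p₃) = 2 * t.circumradius at h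
  rwa [← hr, div_eq_iff hsin] at h

theorem Sphere.dist_mul_dist_le_of_dist_eq_of_angle_eq [FiniteDimensional ℝ V]
    (hd : finrank ℝ V = 2) {s : Sphere P} {p p₁ p₂ q₁ q₂ : P} (hp : p ∈ s)
    (hp₁ : p₁ ∈ s) (hp₂ : p₂ ∈ s) (hq₁ : q₁ ∈ s) (hq₂ : q₂ ∈ s)
    (hp₁p : p₁ ≠ p) (hp₂p : p₂ ≠ p) (hq₁p : q₁ ≠ p) (hq₂p : q₂ ≠ p)
    (hq : dist q₁ p = dist q₂ p) (hangle : ∠ p₁ p p₂ = ∠ q₁ p q₂) (h0 : ∠ p₁ p p₂ ≠ 0) :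
    dist p₁ p * dist p₂ p ≤ dist q₁ p * dist q₂ p := by
  have chord : ∀ {u v : P}, u ∈ s → v ∈ s → u ≠ p → v ≠ p →
      dist u p ^ 2 + dist v p ^ 2 - 2 * dist u p * dist v p * cos (∠ u p v) =
        (2 * s.radius * sin (∠ u p v)) ^ 2 := fun {u v} hu hv hup hvp => by
    rw [← Sphere.dist_eq_two_mul_radius_mul_sin_angle hd hu hp hv hup hvp, sq, sq, sq,
      dist_sq_eq_dist_sq_add_dist_sq_sub_two_mul_dist_mul_dist_mul_cos_angle u p v]
  have hcos : cos (∠ p₁ p p₂) < 1 := by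
    simpa using cos_lt_cos_of_nonneg_of_le_pi le_rfl (angle_le_pi _ _ _)
      ((angle_nonneg _ _ _).lt_of_ne' h0)
  have hp' := chord hp₁ hp₂ hp₁p hp₂p
  have hq' := chord hq₁ hq₂ hq₁p hq₂p
  rw [← hangle, hq] at hq'
  rw [hq]
  have h2 : 2 * (1 - cos (∠ p₁ p p₂)) * (dist p₁ p * dist p₂ p) ≤
      2 * (1 - cos (∠ p₁ p p₂)) * (dist q₂ p * dist q₂ p) := by
    nlinarith [sq_nonneg (dist p₁ p - dist p₂ p)]
  exact le_of_mul_le_mul_left h2 (by linarith)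

end EuclideanGeometry

theorem one_sub_mul_one_sub_norm_sq_eq_mul_dist_sq {E : Type*} [NormedAddCommGroup E]
    [InnerProductSpace ℝ E] {z w : E} {t : ℝ} (hz : ‖z‖ = 1)
    (hw : w ∈ Metric.sphere (t • z) (1 - t)) :
    (1 - t) * (1 - ‖w‖ ^ 2) = t * dist w z ^ 2 := by
  rw [mem_sphere_iff_norm] at hw
  have hw2 := congrArg (· ^ 2) hw
  have hw' : w - t • z = (w - z) + (1 - t) • z := by module
  have hwn : ‖w‖ ^ 2 = ‖(w - z) + z‖ ^ 2 := by rw [sub_add_cancel]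
  simp only [hw', norm_add_sq_real, norm_smul, inner_smul_right, hz, Real.norm_eq_abs, mul_pow,
    sq_abs] at hw2
  rw [hwn, norm_add_sq_real, hz, dist_eq_norm]
  linear_combination -hw2

theorem stmt18 (a : ℂ) (ha : a ∈ Metric.ball (0 : ℂ) 1) (ha0 : a ≠ 0)
    (α : ℝ) (hα : α ∈ Set.Ioo 0 π) (x y x' y' : ℂ)
    (hx : x ∈ Metric.sphere a (1 - ‖a‖))
    (hy : y ∈ Metric.sphere a (1 - ‖a‖))
    (hx' : x' ∈ Metric.sphere a (1 - ‖a‖))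
    (hy' : y' ∈ Metric.sphere a (1 - ‖a‖))
    (hxz : x ≠ a / (‖a‖ : ℂ)) (hyz : y ≠ a / (‖a‖ : ℂ))
    (hx'z : x' ≠ a / (‖a‖ : ℂ)) (hy'z : y' ≠ a / (‖a‖ : ℂ))
    (hang : EuclideanGeometry.angle x (a / (‖a‖ : ℂ)) y = α)
    (hang' : EuclideanGeometry.angle x' (a / (‖a‖ : ℂ)) y' = α)
    (hsym : ‖x'‖ = ‖y'‖) :
    (1 - ‖x‖ ^ 2) * (1 - ‖y‖ ^ 2) ≤
      (1 - ‖x'‖ ^ 2) * (1 - ‖y'‖ ^ 2) := by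
  have ht : 0 < ‖a‖ := norm_pos_iff.mpr ha0
  have hr : 0 < 1 - ‖a‖ := sub_pos.mpr (mem_ball_zero_iff.mp ha)
  set z := a / (‖a‖ : ℂ)
  have hz : ‖z‖ = 1 := by simp [z, ha0]
  have haz : ‖a‖ • z = a := by simp [z, Complex.real_smul, mul_div_cancel₀, ht.ne']
  have hzC : z ∈ Metric.sphere a (1 - ‖a‖) := by
    have : z - a = (1 - ‖a‖) • z := by rw [sub_smul, one_smul, haz]
    rw [mem_sphere_iff_norm, this, norm_smul, hz, mul_one, Real.norm_of_nonneg hr.le]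
  have one_sub_norm_sq : ∀ w ∈ Metric.sphere a (1 - ‖a‖),
      1 - ‖w‖ ^ 2 = ‖a‖ / (1 - ‖a‖) * dist w z ^ 2 := by
    intro w hw
    rw [div_mul_eq_mul_div, eq_div_iff hr.ne', mul_comm]
    exact one_sub_mul_one_sub_norm_sq_eq_mul_dist_sq hz (by rwa [haz])
  have hq : dist x' z = dist y' z := by
    have := one_sub_norm_sq x' hx'
    rw [hsym, one_sub_norm_sq y' hy', mul_right_inj' (by positivity)] at this
    exact (sq_eq_sq₀ dist_nonneg dist_nonneg).mp this.symm
  have hle : dist x z * dist y z ≤ dist x' z * dist y' z :=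
    Sphere.dist_mul_dist_le_of_dist_eq_of_angle_eq (s := ⟨a, 1 - ‖a‖⟩)
      Complex.finrank_real_complex hzC hx hy hx' hy' hxz hyz hx'z hy'z hq
      (hang.trans hang'.symm) (hang ▸ hα.1.ne')
  calc (1 - ‖x‖ ^ 2) * (1 - ‖y‖ ^ 2)
      = (‖a‖ / (1 - ‖a‖)) ^ 2 * (dist x z * dist y z) ^ 2 := by
        rw [one_sub_norm_sq x hx, one_sub_norm_sq y hy]; ring
    _ ≤ (‖a‖ / (1 - ‖a‖)) ^ 2 * (dist x' z * dist y' z) ^ 2 := by gcongr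
    _ = (1 - ‖x'‖ ^ 2) * (1 - ‖y'‖ ^ 2) := by
        rw [one_sub_norm_sq x' hx', one_sub_norm_sq y' hy']; ring
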